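/- (Main result: a monotone integer key ordering solves floating point positive-weight SSSP.) Let all edge weights satisfy w u v ≥ δ for a fixed real δ > 0, assume every vertex is reachable from the source s (d(v) < ∞ for all v), and let v_1, …, v_n be a bijective enumeration of V with v_1 = s such that the integer keys are nondecreasing: i < j implies ⌊d(v_i)/δ⌋ ≤ ⌊d(v_j)/δ⌋ (where d(v) is interpreted as the real number it equals, since it is finite, and ⌊·⌋ is the integer floor). Then Dijkstra's label recursion processed in this order is correct: D_j(v_j) = d(v_j) for every j with 1 ≤ j ≤ n, and the final labels satisfy D_{n+1}(v) = d(v) for every v ∈ V. -/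

import Mathlib

open scoped ENNReal

/-- The length of the path `p 0, p 1, …, p k` in a graph on `Fin n` with
edge-weight function `w` (where `w u v = ∞` encodes the absence of an edge). -/
noncomputable def pathCost {n : ℕ} (w : Fin n → Fin n → ℝ≥0∞) (p : ℕ → Fin n) (k : ℕ) : ℝ≥0∞ :=
  ∑ i ∈ Finset.range k, w (p i) (p (i + 1))

/-- The shortest-path distance from `s` to `v`: the infimum over all finite paths
from `s` to `v` of their lengths. -/
noncomputable def spDist {n : ℕ} (w : Fin n → Fin n → ℝ≥0∞) (s v : Fin n) : ℝ≥0∞ :=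
  ⨅ (k : ℕ) (p : ℕ → Fin n) (_ : p 0 = s) (_ : p k = v), pathCost w p k

/-- Dijkstra's label recursion, processed according to the enumeration `e` (0-indexed):
`dijkstraD w s e 0` is the initial labelling (`0` at `s`, `∞` elsewhere), and step `j`
relaxes all edges out of the extracted vertex `e j`.  The paper's `D_j` is
`dijkstraD w s e (j-1)`; the extraction value of `v_j` is `dijkstraD w s e (j-1) (e (j-1))`. -/
noncomputable def dijkstraD {n : ℕ} (w : Fin n → Fin n → ℝ≥0∞) (s : Fin n) (e : Fin n → Fin n) :
    ℕ → Fin n → ℝ≥0∞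
  | 0 => fun u => if u = s then 0 else ⊤
  | j + 1 => fun u =>
      if h : j < n then
        min (dijkstraD w s e j u) (dijkstraD w s e j (e ⟨j, h⟩) + w (e ⟨j, h⟩) u)
      else dijkstraD w s e j u

/-! Every vertex `v ≠ s` has a predecessor `u` on a shortest path, `d(v) = d(u) + w(u, v)`
(the infimum over the finitely many `u` is attained). As `w(u, v) ≥ δ`, the key `⌊d(u)/δ⌋`
is strictly smaller than that of `v`, so monotonicity of the keys puts `u` earlier in the
enumeration. By induction `u` was extracted with its exact distance, and relaxing the edge
`u → v` at that moment already gave `v` the label `d(v)`. Labels never drop below the true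
distances, so they stay there. -/

section ShortestPaths

variable {n : ℕ} (w : Fin n → Fin n → ℝ≥0∞) (s : Fin n)

lemma pathCost_succ (p : ℕ → Fin n) (k : ℕ) :
    pathCost w p (k + 1) = pathCost w p k + w (p k) (p (k + 1)) :=
  Finset.sum_range_succ _ _

lemma spDist_le_pathCost (p : ℕ → Fin n) (k : ℕ) (h0 : p 0 = s) :
    spDist w s (p k) ≤ pathCost w p k :=
  iInf_le_of_le k (iInf_le_of_le p (iInf_le_of_le h0 (iInf_le _ rfl)))

lemma spDist_le_spDist_add (u v : Fin n) : spDist w s v ≤ spDist w s u + w u v := by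
  simp only [spDist, ENNReal.iInf_add]
  refine le_iInf fun k => le_iInf fun p => le_iInf fun h0 => le_iInf fun hk => ?_
  set q := Function.update p (k + 1) v
  have hq : ∀ i ≤ k, q i = p i := fun i hi => Function.update_of_ne (by omega) _ _
  have hcost : pathCost w q k = pathCost w p k :=
    Finset.sum_congr rfl fun i hi => by
      rw [Finset.mem_range] at hi
      rw [hq i hi.le, hq (i + 1) hi]
  calc spDist w s v = spDist w s (q (k + 1)) := by simp [q]
    _ ≤ pathCost w q (k + 1) := spDist_le_pathCost w s q _ (by rw [hq 0 (Nat.zero_le k), h0])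
    _ = pathCost w p k + w u v := by rw [pathCost_succ, hcost, hq k le_rfl, hk]; simp [q]

lemma exists_spDist_eq_spDist_add {v : Fin n} (hv : v ≠ s) :
    ∃ u, spDist w s v = spDist w s u + w u v := by
  have : Nonempty (Fin n) := ⟨v⟩
  obtain ⟨u, hu⟩ := exists_eq_ciInf_of_finite (f := fun u => spDist w s u + w u v)
  refine ⟨u, le_antisymm (spDist_le_spDist_add w s u v) ?_⟩
  rw [hu]
  refine le_iInf fun k => le_iInf fun p => le_iInf fun h0 => le_iInf fun hk => ?_
  cases k with
  | zero => exact absurd (hk.symm.trans h0) hv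
  | succ k =>
    refine iInf_le_of_le (p k) ?_
    rw [pathCost_succ, hk]
    gcongr
    exact spDist_le_pathCost w s p k h0

end ShortestPaths

section Dijkstra

variable {n : ℕ} (w : Fin n → Fin n → ℝ≥0∞) (s : Fin n) (e : Fin n → Fin n)

lemma spDist_le_dijkstraD (j : ℕ) (u : Fin n) : spDist w s u ≤ dijkstraD w s e j u := by
  induction j generalizing u with
  | zero =>
    by_cases h : u = s
    · subst h
      simpa [dijkstraD, pathCost] using spDist_le_pathCost w u (fun _ => u) 0 rfl
    · simp [dijkstraD, h]
  | succ j ih =>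
    by_cases h : j < n
    · simp only [dijkstraD, dif_pos h]
      exact le_min (ih u) ((spDist_le_spDist_add w s _ u).trans (by gcongr; exact ih _))
    · simpa only [dijkstraD, dif_neg h] using ih u

lemma dijkstraD_antitone (u : Fin n) : Antitone fun j => dijkstraD w s e j u := by
  refine antitone_nat_of_succ_le fun j => ?_
  by_cases h : j < n
  · simp only [dijkstraD, dif_pos h]
    exact min_le_left _ _
  · simp only [dijkstraD, dif_neg h, le_refl]

lemma dijkstraD_succ_le (i : Fin n) (u : Fin n) :
    dijkstraD w s e (i + 1) u ≤ dijkstraD w s e i (e i) + w (e i) u := by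
  simp only [dijkstraD, dif_pos i.isLt]
  exact min_le_right _ _

end Dijkstra

lemma floor_toReal_div_lt_of_eq_add {a b c : ℝ≥0∞} {δ : ℝ} (hδ : 0 < δ)
    (hc : ENNReal.ofReal δ ≤ c) (hb : b ≠ ⊤) (h : b = a + c) :
    ⌊a.toReal / δ⌋ < ⌊b.toReal / δ⌋ := by
  obtain ⟨ha, hc'⟩ := ENNReal.add_ne_top.mp (h ▸ hb)
  have hδc : δ ≤ c.toReal := (ENNReal.ofReal_le_iff_le_toReal hc').mp hc
  have hle : a.toReal / δ + 1 ≤ b.toReal / δ := by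
    rw [div_add_one hδ.ne', h, ENNReal.toReal_add ha hc']
    gcongr
  rw [← Int.add_one_le_iff, ← Int.floor_add_one]
  exact Int.floor_le_floor hle

lemma dijkstraD_extract_eq_spDist {n : ℕ} {w : Fin n → Fin n → ℝ≥0∞} {s : Fin n} {δ : ℝ}
    (hδ : 0 < δ) (hw : ∀ u v : Fin n, ENNReal.ofReal δ ≤ w u v) {e : Fin n → Fin n}
    (he : Function.Surjective e)
    (hkeys : ∀ i j : Fin n, i < j →
      ⌊(spDist w s (e i)).toReal / δ⌋ ≤ ⌊(spDist w s (e j)).toReal / δ⌋)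
    (j : Fin n) : dijkstraD w s e j (e j) = spDist w s (e j) := by
  induction j using WellFoundedLT.induction with | _ j ih => ?_
  refine le_antisymm ?_ (spDist_le_dijkstraD w s e j (e j))
  by_cases hjs : e j = s
  · calc dijkstraD w s e j (e j) ≤ dijkstraD w s e 0 (e j) :=
          dijkstraD_antitone w s e _ (Nat.zero_le _)
      _ = 0 := by simp [dijkstraD, hjs]
      _ ≤ _ := zero_le
  by_cases htop : spDist w s (e j) = ⊤
  · exact htop ▸ le_top
  obtain ⟨u, hu⟩ := exists_spDist_eq_spDist_add w s hjs
  obtain ⟨i, rfl⟩ := he u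
  have hkey := floor_toReal_div_lt_of_eq_add hδ (hw _ _) htop hu
  have hij : i < j := by
    by_contra! hji
    rcases hji.eq_or_lt with rfl | hji
    · exact hkey.false
    · exact (hkeys j i hji).not_gt hkey
  calc dijkstraD w s e j (e j) ≤ dijkstraD w s e (i + 1) (e j) :=
        dijkstraD_antitone w s e _ (Nat.succ_le_of_lt hij)
    _ ≤ dijkstraD w s e i (e i) + w (e i) (e j) := dijkstraD_succ_le w s e i (e j)
    _ = spDist w s (e j) := by rw [ih i hij, hu]

theorem dijkstra_correct_of_floor_monotone_general {n : ℕ}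
    (w : Fin n → Fin n → ℝ≥0∞) (s : Fin n)
    (δ : ℝ) (hδ : 0 < δ) (hw : ∀ u v : Fin n, ENNReal.ofReal δ ≤ w u v)
    (e : Fin n → Fin n) (he : Function.Bijective e)
    (hkeys : ∀ i j : Fin n, i < j →
      ⌊(spDist w s (e i)).toReal / δ⌋ ≤ ⌊(spDist w s (e j)).toReal / δ⌋) :
    (∀ j : Fin n, dijkstraD w s e j.val (e j) = spDist w s (e j)) ∧
      (∀ v : Fin n, dijkstraD w s e n v = spDist w s v) := by
  have extract := dijkstraD_extract_eq_spDist hδ hw he.surjective hkeys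
  refine ⟨extract, fun v => ?_⟩
  obtain ⟨j, rfl⟩ := he.surjective v
  refine le_antisymm ?_ (spDist_le_dijkstraD w s e n (e j))
  exact (dijkstraD_antitone w s e _ j.isLt.le).trans (extract j).le

/-- Main result: if all edge weights are at least `δ > 0`, every vertex is reachable
from `s`, and `e` is a bijective enumeration starting at `s` whose integer keys
`⌊d(v)/δ⌋` are nondecreasing, then Dijkstra's label recursion processed in this
order is correct: every extraction value equals the true distance, and the final
labels equal the shortest-path distances. -/
theorem dijkstra_correct_of_floor_monotone {n : ℕ} (hn : 0 < n)
    (w : Fin n → Fin n → ℝ≥0∞) (s : Fin n)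
    (δ : ℝ) (hδ : 0 < δ) (hw : ∀ u v : Fin n, ENNReal.ofReal δ ≤ w u v)
    (hreach : ∀ v : Fin n, spDist w s v < ⊤)
    (e : Fin n → Fin n) (he : Function.Bijective e) (hes : e ⟨0, hn⟩ = s)
    (hkeys : ∀ i j : Fin n, i < j →
      ⌊(spDist w s (e i)).toReal / δ⌋ ≤ ⌊(spDist w s (e j)).toReal / δ⌋) :
    (∀ j : Fin n, dijkstraD w s e j.val (e j) = spDist w s (e j)) ∧
      (∀ v : Fin n, dijkstraD w s e n v = spDist w s v) :=
  dijkstra_correct_of_floor_monotone_general w s δ hδ hw e he hkeys
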